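/- arXiv:1402.5038 — 8 statements merged into one kernel-verified Lean document; each statement's English description precedes it below -/
import Mathlib

section
/- If a Lie algebra 𝔤 carries a contact form, then its center has dimension at most 1. -/
open Module

/-- `η` is a contact form on the odd-dimensional real Lie algebra `L`: equivalently to the
condition `(∂η)^n ∧ η ≠ 0` (with `dim L = 2n+1`, `∂η (x,y) = -η ⁅x,y⁆`), `η ≠ 0` and the
2-form `∂η` is nondegenerate on the kernel of `η`. -/
def IsContactForm {L : Type*} [LieRing L] [LieAlgebra ℝ L] (η : Module.Dual ℝ L) : Prop :=
  η ≠ 0 ∧ ∀ x : L, η x = 0 → (∀ y : L, η y = 0 → η ⁅x, y⁆ = 0) → x = 0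

/-- `α` is an exact symplectic form on the even-dimensional real Lie algebra `L`:
equivalently to `(∂α)^m ≠ 0` (with `dim L = 2m`), the 2-form `∂α (x,y) = -α ⁅x,y⁆`
is nondegenerate. -/
def IsExactSymplecticForm {L : Type*} [LieRing L] [LieAlgebra ℝ L] (α : Module.Dual ℝ L) : Prop :=
  ∀ x : L, (∀ y : L, α ⁅x, y⁆ = 0) → x = 0

/-- A Lie algebra carrying a contact form has center of dimension at most 1. -/
theorem contact_center_le_one {L : Type*} [LieRing L] [LieAlgebra ℝ L]
    [FiniteDimensional ℝ L] (n : ℕ) (hdim : finrank ℝ L = 2 * n + 1)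
    (η : Module.Dual ℝ L) (hη : IsContactForm η) :
    finrank ℝ ↥(LieAlgebra.center ℝ L) ≤ 1 := by
  obtain ⟨hne, hcond⟩ := hη
  set f : ↥(LieAlgebra.center ℝ L) →ₗ[ℝ] ℝ :=
    η.comp ((LieAlgebra.center ℝ L).toSubmodule).subtype with hf
  have hbr : ∀ (z : ↥(LieAlgebra.center ℝ L)) (y : L), ⁅(z : L), y⁆ = 0 := by
    intro z y
    have hz := (LieModule.mem_maxTrivSubmodule ℝ L L (z : L)).mp z.2 y
    rw [← lie_skew, hz, neg_zero]
  have hker : LinearMap.ker f = ⊥ := by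
    rw [LinearMap.ker_eq_bot']
    intro z hz
    have hz' : η (z : L) = 0 := hz
    have : (z : L) = 0 := hcond (z : L) hz' (fun y _ => by rw [hbr z y, map_zero])
    exact Subtype.ext this
  have h := f.finrank_range_add_finrank_ker
  rw [hker, finrank_bot, add_zero] at h
  rw [← h]
  exact (Submodule.finrank_le _).trans (by simp)
end

section
/- If (𝔤, b) is an orthogonal Lie algebra with a contact form η, and x̄ ∈ 𝔤 is the element with b(x̄, ·) = η, then ker(ad_{x̄}) = ℝ x̄ is one-dimensional and 𝔤 = ker(ad_{x̄}) ⊕ Im(ad_{x̄}) as a vector space direct sum, with Im(ad_{x̄}) = ker(η) equal to the b-orthogonal of ℝ x̄. -/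
open Module

/-!
Invariance of `b` turns `∂η` into `(x, y) ↦ -b(⁅x̄, x⁆, y)`, so the radical of `∂η` is exactly
`ker (ad x̄)`. Since `x̄` lies in that radical and `∂η` is nondegenerate on `ker η`, the radical is
the line `ℝ x̄` and `η x̄ = b(x̄, x̄) ≠ 0`. As `Im (ad x̄) ⊆ ker η` and both have codimension one,
they coincide, and `ker η = x̄^⊥` is complementary to `ℝ x̄` because `b(x̄, x̄) ≠ 0`.
-/

namespace LinearMap.BilinForm.lieInvariant

variable {R L : Type*} [CommRing R] [LieRing L] [Module R L] {b : LinearMap.BilinForm R L}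

lemma apply_lie_eq_lie_apply (hb : b.lieInvariant L) (z x y : L) : b z ⁅x, y⁆ = b ⁅z, x⁆ y := by
  rw [← lie_skew z x, map_neg, LinearMap.neg_apply, hb, neg_neg]

lemma apply_lie_self_left (hb : b.lieInvariant L) (z y : L) : b z ⁅z, y⁆ = 0 := by
  rw [hb.apply_lie_eq_lie_apply, lie_self, map_zero, LinearMap.zero_apply]

end LinearMap.BilinForm.lieInvariant

namespace IsContactForm

variable {L : Type*} [LieRing L] [LieAlgebra ℝ L] {η : Dual ℝ L}

lemma apply_ne_zero (hη : IsContactForm η) {v : L} (hv : ∀ y, η ⁅v, y⁆ = 0) (hv0 : v ≠ 0) :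
    η v ≠ 0 :=
  fun h ↦ hv0 (hη.2 v h fun y _ ↦ hv y)

lemma mem_span_singleton (hη : IsContactForm η) {v x : L} (hv : ∀ y, η ⁅v, y⁆ = 0)
    (hηv : η v ≠ 0) (hx : ∀ y, η ⁅x, y⁆ = 0) : x ∈ ℝ ∙ v := by
  set c := η x / η v
  have hker : η (x - c • v) = 0 := by
    rw [map_sub, map_smul, smul_eq_mul, div_mul_cancel₀ _ hηv, sub_self]
  have hrad : ∀ y, η ⁅x - c • v, y⁆ = 0 := fun y ↦ by
    rw [sub_lie, smul_lie, map_sub, map_smul, hx, hv, smul_zero, sub_zero]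
  have : x - c • v = 0 := hη.2 _ hker fun y _ ↦ hrad y
  exact Submodule.mem_span_singleton.2 ⟨c, (sub_eq_zero.1 this).symm⟩

end IsContactForm

section OrthogonalContact

variable {L : Type*} [LieRing L] [LieAlgebra ℝ L] {b : LinearMap.BilinForm ℝ L}
  (hb : b.lieInvariant L) {xb : L} (hη : IsContactForm (b xb))
include hb hη

lemma apply_self_ne_zero_of_isContactForm : b xb xb ≠ 0 :=
  hη.apply_ne_zero (hb.apply_lie_self_left xb) (ne_zero_of_map hη.1)

lemma ker_ad_eq_span_of_isContactForm :
    LinearMap.ker (LieAlgebra.ad ℝ L xb) = ℝ ∙ xb := by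
  refine le_antisymm (fun x hx ↦ ?_) ?_
  · have hx : ⁅xb, x⁆ = 0 := hx
    refine hη.mem_span_singleton (hb.apply_lie_self_left xb)
      (apply_self_ne_zero_of_isContactForm hb hη) fun y ↦ ?_
    rw [hb.apply_lie_eq_lie_apply, hx, map_zero, LinearMap.zero_apply]
  · rw [Submodule.span_singleton_le_iff_mem]
    exact lie_self xb

lemma range_ad_eq_ker_of_isContactForm [FiniteDimensional ℝ L] :
    LinearMap.range (LieAlgebra.ad ℝ L xb) = LinearMap.ker (b xb) := by
  refine Submodule.eq_of_le_of_finrank_eq ?_ ?_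
  · rintro _ ⟨y, rfl⟩
    exact hb.apply_lie_self_left xb y
  · have hrank := LinearMap.finrank_range_add_finrank_ker (LieAlgebra.ad ℝ L xb)
    have hcorank := Dual.finrank_ker_add_one_of_ne_zero hη.1
    rw [ker_ad_eq_span_of_isContactForm hb hη,
      finrank_span_singleton (ne_zero_of_map hη.1)] at hrank
    omega

end OrthogonalContact

theorem orthogonal_contact_ad_decomposition_general {L : Type*} [LieRing L] [LieAlgebra ℝ L]
    [FiniteDimensional ℝ L]
    (b : LinearMap.BilinForm ℝ L)
    (hinv : ∀ x y z : L, b ⁅x, y⁆ z + b y ⁅x, z⁆ = 0)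
    (η : Module.Dual ℝ L) (hη : IsContactForm η)
    (xb : L) (hxb : ∀ y : L, b xb y = η y) :
    xb ≠ 0 ∧
    LinearMap.ker ((LieAlgebra.ad ℝ L xb) : L →ₗ[ℝ] L) = Submodule.span ℝ {xb} ∧
    IsCompl (LinearMap.ker ((LieAlgebra.ad ℝ L xb) : L →ₗ[ℝ] L))
      (LinearMap.range ((LieAlgebra.ad ℝ L xb) : L →ₗ[ℝ] L)) ∧
    LinearMap.range ((LieAlgebra.ad ℝ L xb) : L →ₗ[ℝ] L) = LinearMap.ker η ∧
    LinearMap.ker η = b.orthogonal (Submodule.span ℝ {xb}) := by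
  have hb : b.lieInvariant L := fun x y z ↦ eq_neg_of_add_eq_zero_left (hinv x y z)
  obtain rfl : b xb = η := LinearMap.ext hxb
  have hker := ker_ad_eq_span_of_isContactForm hb hη
  have hrange := range_ad_eq_ker_of_isContactForm hb hη
  have horth : LinearMap.ker (b xb) = b.orthogonal (ℝ ∙ xb) :=
    (b.orthogonal_span_singleton_eq_toLin_ker xb).symm
  refine ⟨ne_zero_of_map hη.1, hker, ?_, hrange, horth⟩
  rw [hker, hrange, horth]
  exact b.isCompl_span_singleton_orthogonal (apply_self_ne_zero_of_isContactForm hb hη)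

/-- In an orthogonal Lie algebra with contact form `η = b(xb, ·)`, one has
`ker (ad xb) = ℝ xb`, `𝔤 = ker (ad xb) ⊕ Im (ad xb)` and
`Im (ad xb) = ker η` equals the `b`-orthogonal of `ℝ xb`. -/
theorem orthogonal_contact_ad_decomposition {L : Type*} [LieRing L] [LieAlgebra ℝ L]
    [FiniteDimensional ℝ L] (n : ℕ) (hdim : finrank ℝ L = 2 * n + 1)
    (b : LinearMap.BilinForm ℝ L)
    (hsym : ∀ x y : L, b x y = b y x)
    (hnd : ∀ x : L, (∀ y : L, b x y = 0) → x = 0)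
    (hinv : ∀ x y z : L, b ⁅x, y⁆ z + b y ⁅x, z⁆ = 0)
    (η : Module.Dual ℝ L) (hη : IsContactForm η)
    (xb : L) (hxb : ∀ y : L, b xb y = η y) :
    xb ≠ 0 ∧
    LinearMap.ker ((LieAlgebra.ad ℝ L xb) : L →ₗ[ℝ] L) = Submodule.span ℝ {xb} ∧
    IsCompl (LinearMap.ker ((LieAlgebra.ad ℝ L xb) : L →ₗ[ℝ] L))
      (LinearMap.range ((LieAlgebra.ad ℝ L xb) : L →ₗ[ℝ] L)) ∧
    LinearMap.range ((LieAlgebra.ad ℝ L xb) : L →ₗ[ℝ] L) = LinearMap.ker η ∧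
    LinearMap.ker η = b.orthogonal (Submodule.span ℝ {xb}) :=
  orthogonal_contact_ad_decomposition_general b hinv η hη xb hxb
end

section
/- A Lie algebra that is a direct sum 𝔤 = 𝔤₁ ⊕ 𝔤₂ of two ideals carries a contact form if and only if one of the ideals carries a contact form and the other carries an exact symplectic form. -/
open Module

/-
Write `∂η (x, y) = -η ⁅x, y⁆`. In finite dimension, `η` is a contact form iff the radical of `∂η`
meets `ker η` trivially without being contained in it, and `α` is exact symplectic iff the radical
of `∂α` is zero. Since the two ideals commute, the radical of `∂η` on `𝔤₁ ⊕ 𝔤₂` is the direct sum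
of the radicals for the restrictions `η₁`, `η₂`. A subspace meeting the hyperplane `ker η`
trivially has dimension at most one, so for contact `η` one of these radicals, say that of `η₁`,
vanishes: `η₁` is exact symplectic, the radical of `∂η` is that of `∂η₂`, and `η₂` is contact.
Conversely, if `α₁` is exact symplectic and `η₂` is contact, then `α₁ + η₂` is contact.
-/

theorem Module.Dual.finrank_le_one_of_disjoint_ker {K V : Type*} [Field K] [AddCommGroup V]
    [Module K V] (f : Dual K V) {W : Submodule K V} (h : Disjoint W (LinearMap.ker f)) :
    finrank K W ≤ 1 := by
  have hinj : Function.Injective (f.domRestrict W) :=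
    LinearMap.ker_eq_bot.1 <| LinearMap.ker_eq_bot'.2 fun x hx =>
      Subtype.ext (Submodule.disjoint_def.1 h x x.2 hx)
  simpa using LinearMap.finrank_le_finrank_of_injective hinj

theorem Submodule.disjoint_map_iff_of_injective {R M N : Type*} [Ring R] [AddCommGroup M]
    [AddCommGroup N] [Module R M] [Module R N] {f : M →ₗ[R] N} (hf : Function.Injective f)
    {p : Submodule R M} {q : Submodule R N} : Disjoint (p.map f) q ↔ Disjoint p (q.comap f) := by
  simp only [Submodule.disjoint_def, Submodule.mem_map, Submodule.mem_comap]
  constructor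
  · intro h x hx hfx
    exact hf (by rw [h (f x) ⟨x, hx, rfl⟩ hfx, map_zero])
  · rintro h _ ⟨x, hx, rfl⟩ hfx
    rw [h x hx hfx, map_zero]

section Radical

variable {L : Type*} [LieRing L] [LieAlgebra ℝ L]

/-- The bilinear form `-∂η`. -/
def bracketForm (η : Dual ℝ L) : L →ₗ[ℝ] L →ₗ[ℝ] ℝ :=
  (LieModule.toEnd ℝ L L : L →ₗ[ℝ] Module.End ℝ L).compr₂ η

@[simp]
theorem bracketForm_apply (η : Dual ℝ L) (x y : L) : bracketForm η x y = η ⁅x, y⁆ := rfl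

def dRadical (η : Dual ℝ L) : Submodule ℝ L := LinearMap.ker (bracketForm η)

@[simp]
theorem mem_dRadical {η : Dual ℝ L} {x : L} : x ∈ dRadical η ↔ ∀ y, η ⁅x, y⁆ = 0 := by
  simp [dRadical, LinearMap.ext_iff]

theorem isExactSymplecticForm_iff_dRadical_eq_bot {α : Dual ℝ L} :
    IsExactSymplecticForm α ↔ dRadical α = ⊥ := by
  simp [IsExactSymplecticForm, Submodule.eq_bot_iff]

theorem mem_dRadical_of_forall_mem_ker {η : Dual ℝ L} {v x : L} (hv : η v ≠ 0)
    (hxv : η ⁅x, v⁆ = 0) (hx : ∀ y, η y = 0 → η ⁅x, y⁆ = 0) : x ∈ dRadical η := by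
  refine mem_dRadical.2 fun y => ?_
  have hy : η (y - (η y / η v) • v) = 0 := by simp [hv]
  simpa [lie_sub, lie_smul, hxv] using hx _ hy

theorem IsContactForm.disjoint_dRadical_ker {η : Dual ℝ L} (h : IsContactForm η) :
    Disjoint (dRadical η) (LinearMap.ker η) :=
  Submodule.disjoint_def.2 fun x hx hx0 => h.2 x hx0 fun y _ => mem_dRadical.1 hx y

theorem IsContactForm.not_dRadical_le_ker [FiniteDimensional ℝ L] {η : Dual ℝ L}
    (h : IsContactForm η) : ¬ dRadical η ≤ LinearMap.ker η := by
  -- `ker η` is a hyperplane, so some `v ≠ 0` is `∂η`-orthogonal to it: a Reeb vector.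
  have hker : LinearMap.ker η ≠ ⊤ := fun h' => h.1 (LinearMap.ker_eq_top.1 h')
  have hlt : finrank ℝ (Dual ℝ (LinearMap.ker η)) < finrank ℝ L := by
    rw [Subspace.dual_finrank_eq]
    exact Submodule.finrank_lt hker
  obtain ⟨v, hv, hv0⟩ := Submodule.exists_mem_ne_zero_of_ne_bot <|
    LinearMap.ker_ne_bot_of_finrank_lt
      (f := LinearMap.domRestrict' (LinearMap.ker η) ∘ₗ bracketForm η) hlt
  have hvker : ∀ y, η y = 0 → η ⁅v, y⁆ = 0 := fun y hy => by
    simpa using LinearMap.congr_fun (LinearMap.mem_ker.1 hv) ⟨y, hy⟩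
  have hηv : η v ≠ 0 := fun h0 => hv0 (h.2 v h0 hvker)
  exact SetLike.not_le_iff_exists.2
    ⟨v, mem_dRadical_of_forall_mem_ker hηv (by rw [lie_self, map_zero]) hvker, hηv⟩

theorem isContactForm_of_disjoint_dRadical_ker {η : Dual ℝ L}
    (hd : Disjoint (dRadical η) (LinearMap.ker η)) (hR : ¬ dRadical η ≤ LinearMap.ker η) :
    IsContactForm η := by
  obtain ⟨v, hvR, hv⟩ := SetLike.not_le_iff_exists.1 hR
  refine ⟨fun h => hv (by simp [h]), fun x hx0 hx => Submodule.disjoint_def.1 hd x ?_ hx0⟩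
  refine mem_dRadical_of_forall_mem_ker hv ?_ hx
  rw [← lie_skew, map_neg, mem_dRadical.1 hvR, neg_zero]

theorem isContactForm_iff_disjoint_dRadical_ker [FiniteDimensional ℝ L] {η : Dual ℝ L} :
    IsContactForm η ↔ Disjoint (dRadical η) (LinearMap.ker η) ∧ ¬ dRadical η ≤ LinearMap.ker η :=
  ⟨fun h => ⟨h.disjoint_dRadical_ker, h.not_dRadical_le_ker⟩,
    fun h => isContactForm_of_disjoint_dRadical_ker h.1 h.2⟩

end Radical

section DirectSum

variable {L : Type*} [LieRing L] [LieAlgebra ℝ L] {I₁ I₂ : LieIdeal ℝ L}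

def restrictDual (I : LieIdeal ℝ L) (η : Dual ℝ L) : Dual ℝ I := η ∘ₗ (I.incl : I →ₗ[ℝ] L)

@[simp]
theorem restrictDual_apply (I : LieIdeal ℝ L) (η : Dual ℝ L) (x : I) :
    restrictDual I η x = η x := rfl

theorem LieIdeal.lie_eq_zero_of_disjoint (h : Disjoint I₁.toSubmodule I₂.toSubmodule) {x y : L}
    (hx : x ∈ I₁) (hy : y ∈ I₂) : ⁅x, y⁆ = 0 :=
  Submodule.disjoint_def.1 h _ (lie_mem_left ℝ L I₁ x y hx) (lie_mem_right ℝ L I₂ x y hy)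

theorem coe_mem_dRadical_iff (hcompl : IsCompl I₁.toSubmodule I₂.toSubmodule) {η : Dual ℝ L}
    {x : I₁} : (x : L) ∈ dRadical η ↔ x ∈ dRadical (restrictDual I₁ η) := by
  refine ⟨fun hx => mem_dRadical.2 fun y => mem_dRadical.1 hx y,
    fun hx => mem_dRadical.2 fun y => ?_⟩
  obtain ⟨y₁, y₂, hy₁, hy₂, rfl⟩ := Submodule.codisjoint_iff_exists_add_eq.1 hcompl.codisjoint y
  rw [lie_add, LieIdeal.lie_eq_zero_of_disjoint hcompl.disjoint x.2 hy₂, add_zero]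
  exact mem_dRadical.1 hx ⟨y₁, hy₁⟩

theorem dRadical_le_of_dRadical_restrictDual_eq_bot (hcompl : IsCompl I₁.toSubmodule I₂.toSubmodule)
    {η : Dual ℝ L} (h : dRadical (restrictDual I₁ η) = ⊥) : dRadical η ≤ I₂.toSubmodule := by
  intro x hx
  obtain ⟨x₁, x₂, hx₁, hx₂, rfl⟩ := Submodule.codisjoint_iff_exists_add_eq.1 hcompl.codisjoint x
  have hx₁R : (⟨x₁, hx₁⟩ : I₁) ∈ dRadical (restrictDual I₁ η) := mem_dRadical.2 fun y => by
    have hx₂y : ⁅x₂, (y : L)⁆ = 0 := by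
      rw [← lie_skew, LieIdeal.lie_eq_zero_of_disjoint hcompl.disjoint y.2 hx₂, neg_zero]
    simpa [hx₂y] using mem_dRadical.1 hx y
  rw [h, Submodule.mem_bot] at hx₁R
  rwa [show x₁ = 0 from congrArg Subtype.val hx₁R, zero_add]

theorem isContactForm_iff_restrictDual_of_isExactSymplecticForm [FiniteDimensional ℝ L]
    (hcompl : IsCompl I₁.toSubmodule I₂.toSubmodule) {η : Dual ℝ L}
    (h₁ : IsExactSymplecticForm (restrictDual I₁ η)) :
    IsContactForm η ↔ IsContactForm (restrictDual I₂ η) := by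
  rw [isExactSymplecticForm_iff_dRadical_eq_bot] at h₁
  have hR : dRadical η = (dRadical (restrictDual I₂ η)).map (I₂.incl : I₂ →ₗ[ℝ] L) := by
    refine le_antisymm (fun x hx => ?_)
      (Submodule.map_le_iff_le_comap.2 fun x hx => (coe_mem_dRadical_iff hcompl.symm).2 hx)
    exact ⟨⟨x, dRadical_le_of_dRadical_restrictDual_eq_bot hcompl h₁ hx⟩,
      (coe_mem_dRadical_iff hcompl.symm).1 hx, rfl⟩
  have hker : LinearMap.ker (restrictDual I₂ η) = (LinearMap.ker η).comap (I₂.incl : I₂ →ₗ[ℝ] L) :=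
    LinearMap.ker_comp _ _
  rw [isContactForm_iff_disjoint_dRadical_ker, isContactForm_iff_disjoint_dRadical_ker, hR, hker,
    Submodule.map_le_iff_le_comap, Submodule.disjoint_map_iff_of_injective I₂.incl_injective]

theorem IsContactForm.isExactSymplecticForm_restrictDual_or [FiniteDimensional ℝ L]
    (hcompl : IsCompl I₁.toSubmodule I₂.toSubmodule) {η : Dual ℝ L} (h : IsContactForm η) :
    IsExactSymplecticForm (restrictDual I₁ η) ∨ IsExactSymplecticForm (restrictDual I₂ η) := by
  simp only [isExactSymplecticForm_iff_dRadical_eq_bot, ← Submodule.finrank_eq_zero]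
  set R₁ := (dRadical (restrictDual I₁ η)).map (I₁.incl : I₁ →ₗ[ℝ] L)
  set R₂ := (dRadical (restrictDual I₂ η)).map (I₂.incl : I₂ →ₗ[ℝ] L)
  have hR₁ : R₁ ≤ dRadical η :=
    Submodule.map_le_iff_le_comap.2 fun x hx => (coe_mem_dRadical_iff hcompl).2 hx
  have hR₂ : R₂ ≤ dRadical η :=
    Submodule.map_le_iff_le_comap.2 fun x hx => (coe_mem_dRadical_iff hcompl.symm).2 hx
  have hR₁₂ : R₁ ⊓ R₂ = ⊥ := disjoint_iff.1 <| hcompl.disjoint.mono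
    (Submodule.map_le_iff_le_comap.2 fun x _ => x.2)
    (Submodule.map_le_iff_le_comap.2 fun x _ => x.2)
  have hdim : finrank ℝ R₁ + finrank ℝ R₂ ≤ 1 := by
    rw [← Submodule.finrank_sup_add_finrank_inf_eq, hR₁₂, finrank_bot, add_zero]
    exact (Submodule.finrank_mono (sup_le hR₁ hR₂)).trans
      (η.finrank_le_one_of_disjoint_ker h.disjoint_dRadical_ker)
  have e₁ : finrank ℝ (dRadical (restrictDual I₁ η)) = finrank ℝ R₁ :=
    (Submodule.equivMapOfInjective _ I₁.incl_injective _).finrank_eq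
  have e₂ : finrank ℝ (dRadical (restrictDual I₂ η)) = finrank ℝ R₂ :=
    (Submodule.equivMapOfInjective _ I₂.incl_injective _).finrank_eq
  omega

theorem restrictDual_ofIsCompl_left (hcompl : IsCompl I₁.toSubmodule I₂.toSubmodule)
    (α₁ : Dual ℝ I₁) (α₂ : Dual ℝ I₂) : restrictDual I₁ (LinearMap.ofIsCompl hcompl α₁ α₂) = α₁ :=
  LinearMap.ext fun x => LinearMap.ofIsCompl_apply_left hcompl x

theorem restrictDual_ofIsCompl_right (hcompl : IsCompl I₁.toSubmodule I₂.toSubmodule)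
    (α₁ : Dual ℝ I₁) (α₂ : Dual ℝ I₂) : restrictDual I₂ (LinearMap.ofIsCompl hcompl α₁ α₂) = α₂ :=
  LinearMap.ext fun x => LinearMap.ofIsCompl_apply_right hcompl x

theorem isContactForm_ofIsCompl [FiniteDimensional ℝ L]
    (hcompl : IsCompl I₁.toSubmodule I₂.toSubmodule) {α₁ : Dual ℝ I₁} {η₂ : Dual ℝ I₂}
    (hα₁ : IsExactSymplecticForm α₁) (hη₂ : IsContactForm η₂) :
    IsContactForm (LinearMap.ofIsCompl hcompl α₁ η₂) := by
  rw [isContactForm_iff_restrictDual_of_isExactSymplecticForm hcompl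
    (by rwa [restrictDual_ofIsCompl_left]), restrictDual_ofIsCompl_right]
  exact hη₂

end DirectSum

/-- A Lie algebra which is the direct sum of two ideals carries a contact form iff one of
the ideals carries a contact form and the other an exact symplectic form. -/
theorem contact_direct_sum_iff {L : Type*} [LieRing L] [LieAlgebra ℝ L]
    [FiniteDimensional ℝ L] (I₁ I₂ : LieIdeal ℝ L)
    (hcompl : IsCompl I₁.toSubmodule I₂.toSubmodule) :
    (∃ η : Module.Dual ℝ L, IsContactForm η) ↔
      ((∃ η₁ : Module.Dual ℝ ↥I₁, IsContactForm η₁) ∧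
        (∃ α₂ : Module.Dual ℝ ↥I₂, IsExactSymplecticForm α₂)) ∨
      ((∃ α₁ : Module.Dual ℝ ↥I₁, IsExactSymplecticForm α₁) ∧
        (∃ η₂ : Module.Dual ℝ ↥I₂, IsContactForm η₂)) := by
  constructor
  · rintro ⟨η, hη⟩
    rcases hη.isExactSymplecticForm_restrictDual_or hcompl with h₁ | h₂
    · exact Or.inr ⟨⟨_, h₁⟩, _,
        (isContactForm_iff_restrictDual_of_isExactSymplecticForm hcompl h₁).1 hη⟩
    · exact Or.inl ⟨⟨_,
        (isContactForm_iff_restrictDual_of_isExactSymplecticForm hcompl.symm h₂).1 hη⟩, _, h₂⟩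
  · rintro (⟨⟨η₁, hη₁⟩, α₂, hα₂⟩ | ⟨⟨α₁, hα₁⟩, η₂, hη₂⟩)
    · exact ⟨_, isContactForm_ofIsCompl hcompl.symm hα₂ hη₁⟩
    · exact ⟨_, isContactForm_ofIsCompl hcompl hα₁ hη₂⟩
end

section
/- Let 𝔤 be a Lie algebra admitting a flat left-invariant Riemannian structure in Milnor's sense: 𝔤 = A₁ ⊕ A₂ is an orthogonal direct sum where A₁ is an abelian ideal, A₂ is an abelian subalgebra, and for each a ∈ A₂ the map ad_a restricted to A₁ is skew-adjoint with respect to a positive-definite inner product. If dim 𝔤 ≥ 5 (and dim 𝔤 odd), then 𝔤 has no contact form. -/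
/-!
A contact form `η` makes `(x, y) ↦ η ⁅x, y⁆` nondegenerate on `ker η`, so its radical has
dimension at most one. Since `A₁` and `A₂` are abelian, this form only pairs `A₂` with `A₁`,
through `Φ : a ↦ η ∘ ad a|A₁`, and its radical has dimension `dim 𝔤 - 2 rank Φ`; hence
`rank Φ ≥ n`. On the other hand `rank Φ ≤ dim A₂`, and `rank Φ ≤ dim A₁ / 2`: the image of `Φ`
is the span of the orbit of `η|A₁` under a commuting family of skew-adjoint operators, and on
each irreducible invariant subspace such a family acts through multiples of one operator `J` with
`J² < 0`, which contributes at most one orbit direction to a space of even positive dimension.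
Altogether
`3n ≤ 2n + 1`, which is impossible for `n ≥ 2`.
-/

open Module

open Submodule RealInnerProductSpace
open scoped InnerProductSpace

theorem even_finrank_of_mul_self_eq_smul_one {K V : Type*} [Field K] [LinearOrder K]
    [IsStrictOrderedRing K] [AddCommGroup V] [Module K V] [FiniteDimensional K V] {f : End K V}
    {c : K} (hc : c < 0) (hf : f * f = c • 1) : Even (finrank K V) := by
  by_contra hodd
  have hdet : LinearMap.det f * LinearMap.det f = c ^ finrank K V := by
    rw [← map_mul, hf, LinearMap.det_smul, map_one, mul_one]
  have := (Nat.not_even_iff_odd.mp hodd).pow_neg hc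
  nlinarith [mul_self_nonneg (LinearMap.det f)]

def orbitSpan {R V ι : Type*} [Semiring R] [AddCommMonoid V] [Module R V] (T : ι → End R V)
    (u : V) : Submodule R V :=
  span R (Set.range fun i => T i u)

section OrbitSpan

variable {R V V' ι : Type*} [Ring R] [AddCommGroup V] [Module R V] [AddCommGroup V']
  [Module R V'] {T : ι → End R V}

theorem orbitSpan_map {S : ι → End R V'} (f : V →ₗ[R] V') (hf : ∀ i, f ∘ₗ T i = S i ∘ₗ f)
    (u : V) : (orbitSpan T u).map f = orbitSpan S (f u) := by
  rw [orbitSpan, map_span, ← Set.range_comp]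
  congr 2
  ext i
  exact LinearMap.congr_fun (hf i) u

theorem orbitSpan_neg (u : V) : orbitSpan (fun i => -T i) u = orbitSpan T u := by
  rw [orbitSpan, orbitSpan, ← span_neg]
  congr 1
  ext v
  simp [neg_eq_iff_eq_neg]

theorem orbitSpan_add_le (u v : V) : orbitSpan T (u + v) ≤ orbitSpan T u ⊔ orbitSpan T v := by
  rw [orbitSpan, span_le]
  rintro _ ⟨i, rfl⟩
  show T i (u + v) ∈ _
  rw [map_add]
  exact add_mem_sup (subset_span ⟨i, rfl⟩) (subset_span ⟨i, rfl⟩)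

theorem finrank_orbitSpan_restrict {W : Submodule R V} (hW : ∀ i, Set.MapsTo (T i) W W) (a : W) :
    finrank R (orbitSpan (fun i => (T i).restrict (hW i)) a) = finrank R (orbitSpan T a) := by
  rw [← finrank_map_subtype_eq, orbitSpan_map W.subtype (fun i => rfl)]
  rfl

end OrbitSpan

section SkewFamily

variable {𝕜 E ι : Type*} [RCLike 𝕜] [NormedAddCommGroup E] [InnerProductSpace 𝕜 E]

theorem mapsTo_orthogonal_of_skew {f : End 𝕜 E} (hf : ∀ x y, ⟪f x, y⟫_𝕜 = -⟪x, f y⟫_𝕜)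
    {W : Submodule 𝕜 E} (hW : Set.MapsTo f W W) : Set.MapsTo f Wᗮ Wᗮ := by
  intro x hx
  rw [SetLike.mem_coe, mem_orthogonal] at hx ⊢
  intro w hw
  rw [← neg_eq_zero, ← hf, hx _ (hW hw)]

theorem isSymmetric_mul_of_skew {f g : End 𝕜 E} (hf : ∀ x y, ⟪f x, y⟫_𝕜 = -⟪x, f y⟫_𝕜)
    (hg : ∀ x y, ⟪g x, y⟫_𝕜 = -⟪x, g y⟫_𝕜) (hfg : Commute f g) : (f * g).IsSymmetric := by
  intro x y
  rw [Module.End.mul_apply, hf, hg, neg_neg, ← Module.End.mul_apply g, ← hfg.eq,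
    Module.End.mul_apply]

theorem exists_eq_smul_one_of_isSymmetric [FiniteDimensional 𝕜 E] {T : ι → End 𝕜 E}
    (hirr : ∀ W : Submodule 𝕜 E, (∀ i, Set.MapsTo (T i) W W) → W = ⊥ ∨ W = ⊤)
    {B : End 𝕜 E} (hB : B.IsSymmetric) (hBT : ∀ i, Commute B (T i)) : ∃ c : 𝕜, B = c • 1 := by
  cases subsingleton_or_nontrivial E with
  | inl _ => exact ⟨0, Subsingleton.elim _ _⟩
  | inr _ =>
    obtain ⟨c, hc⟩ : ∃ c, B.HasEigenvalue c := ⟨_, hB.hasEigenvalue_iSup_of_finiteDimensional⟩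
    refine ⟨c, LinearMap.ext fun x => ?_⟩
    have htop : B.eigenspace c = ⊤ :=
      (hirr _ fun i => B.mapsTo_genEigenspace_of_comm (hBT i) c 1).resolve_left hc
    exact Module.End.mem_eigenspace_iff.mp (htop ▸ mem_top)

end SkewFamily

section RealSkewFamily

variable {E ι : Type*} [NormedAddCommGroup E] [InnerProductSpace ℝ E] [FiniteDimensional ℝ E]
  {T : ι → End ℝ E}

theorem two_mul_finrank_orbitSpan_le_of_irreducible (hskew : ∀ i x y, ⟪T i x, y⟫ = -⟪x, T i y⟫)
    (hcomm : ∀ i j, Commute (T i) (T j))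
    (hirr : ∀ W : Submodule ℝ E, (∀ i, Set.MapsTo (T i) W W) → W = ⊥ ∨ W = ⊤) (u : E) :
    2 * finrank ℝ (orbitSpan T u) ≤ finrank ℝ E := by
  by_cases hzero : ∀ i, T i u = 0
  · have hbot : orbitSpan T u = ⊥ := by
      rw [orbitSpan, span_eq_bot]
      rintro _ ⟨i, rfl⟩
      exact hzero i
    rw [hbot, finrank_bot, mul_zero]
    exact Nat.zero_le _
  push Not at hzero
  obtain ⟨k, hk⟩ := hzero
  have hscalar (i j : ι) : ∃ c : ℝ, T i * T j = c • 1 :=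
    exists_eq_smul_one_of_isSymmetric hirr (isSymmetric_mul_of_skew (hskew i) (hskew j) (hcomm i j))
      fun l => (hcomm i l).mul_left (hcomm j l)
  obtain ⟨c, hc⟩ := hscalar k k
  have hu : u ≠ 0 := fun h => hk (by rw [h, map_zero])
  have hTk (x : E) : T k (T k x) = c • x := by
    simpa using LinearMap.congr_fun hc x
  have hc_neg : c < 0 := by
    have h := hskew k (T k u) u
    rw [hTk, real_inner_smul_left] at h
    have hTku : 0 < ⟪T k u, T k u⟫ := real_inner_self_pos.mpr hk
    have huu : 0 < ⟪u, u⟫ := real_inner_self_pos.mpr hu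
    nlinarith
  have hle : orbitSpan T u ≤ ℝ ∙ T k u := by
    rw [orbitSpan, span_le]
    rintro _ ⟨i, rfl⟩
    obtain ⟨d, hd⟩ := hscalar i k
    have h := LinearMap.congr_fun hd (T k u)
    simp only [Module.End.mul_apply, hTk, map_smul, LinearMap.smul_apply, Module.End.one_apply] at h
    refine mem_span_singleton.mpr ⟨c⁻¹ * d, ?_⟩
    rw [mul_smul, ← h, smul_smul, inv_mul_cancel₀ hc_neg.ne, one_smul]
  have heven := even_finrank_of_mul_self_eq_smul_one hc_neg hc
  have : Nontrivial E := ⟨⟨u, 0, hu⟩⟩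
  have hpos : 0 < finrank ℝ E := finrank_pos
  have hone : finrank ℝ (orbitSpan T u) ≤ 1 :=
    (finrank_mono hle).trans (finrank_span_singleton hk).le
  obtain ⟨r, hr⟩ := heven
  omega

theorem two_mul_finrank_orbitSpan_le (hskew : ∀ i x y, ⟪T i x, y⟫ = -⟪x, T i y⟫)
    (hcomm : ∀ i j, Commute (T i) (T j)) (u : E) :
    2 * finrank ℝ (orbitSpan T u) ≤ finrank ℝ E := by
  induction hN : finrank ℝ E using Nat.strong_induction_on generalizing E u with
  | _ N ih =>
  by_cases hirr : ∀ W : Submodule ℝ E, (∀ i, Set.MapsTo (T i) W W) → W = ⊥ ∨ W = ⊤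
  · exact hN ▸ two_mul_finrank_orbitSpan_le_of_irreducible hskew hcomm hirr u
  push Not at hirr
  obtain ⟨W, hW, hW_bot, hW_top⟩ := hirr
  have hWperp (i : ι) := mapsTo_orthogonal_of_skew (hskew i) (hW i)
  have hrestrict (U : Submodule ℝ E) (hU : ∀ i, Set.MapsTo (T i) U U) (hlt : finrank ℝ U < N)
      (a : E) (ha : a ∈ U) : 2 * finrank ℝ (orbitSpan T a) ≤ finrank ℝ U := by
    rw [← finrank_orbitSpan_restrict hU ⟨a, ha⟩]
    exact ih _ hlt (T := fun i => (T i).restrict (hU i)) (fun i x y => hskew i x y)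
      (fun i j => LinearMap.restrict_commute (hcomm i j) (hU i) (hU j)) _ rfl
  have hW_lt : finrank ℝ W < N := hN ▸ finrank_lt hW_top
  have hWperp_lt : finrank ℝ Wᗮ < N := hN ▸ finrank_lt (mt W.orthogonal_eq_top_iff.mp hW_bot)
  obtain ⟨a, ha, b, hb, rfl⟩ : ∃ a ∈ W, ∃ b ∈ Wᗮ, a + b = u :=
    mem_sup.mp (W.sup_orthogonal_of_hasOrthogonalProjection ▸ mem_top)
  calc 2 * finrank ℝ (orbitSpan T (a + b))
      ≤ 2 * finrank ℝ (orbitSpan T a) + 2 * finrank ℝ (orbitSpan T b) := by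
        have := (finrank_mono (orbitSpan_add_le a b)).trans
          (finrank_add_le_finrank_add_finrank (orbitSpan T a) (orbitSpan T b))
        linarith
    _ ≤ finrank ℝ W + finrank ℝ Wᗮ :=
        add_le_add (hrestrict W hW hW_lt a ha) (hrestrict Wᗮ hWperp hWperp_lt b hb)
    _ = N := W.finrank_add_finrank_orthogonal.trans hN

end RealSkewFamily

namespace LinearMap.BilinForm

theorem finrank_le_two_mul_finrank_range_add_finrank_ker {K V : Type*}
    [Field K] [AddCommGroup V] [Module K V] [FiniteDimensional K V] {B : LinearMap.BilinForm K V}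
    (hB : B.IsAlt) {A₁ A₂ : Submodule K V} (hA : IsCompl A₁ A₂)
    (h₁ : ∀ x ∈ A₁, ∀ y ∈ A₁, B x y = 0) (h₂ : ∀ x ∈ A₂, ∀ y ∈ A₂, B x y = 0) :
    finrank K V ≤
      2 * finrank K (LinearMap.range (B.compl₁₂ A₂.subtype A₁.subtype)) +
        finrank K (LinearMap.ker B) := by
  set Φ := B.compl₁₂ A₂.subtype A₁.subtype
  have hmem_ker (x : V) (hx₁ : ∀ y ∈ A₁, B x y = 0) (hx₂ : ∀ y ∈ A₂, B x y = 0) :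
      x ∈ LinearMap.ker B := by
    refine LinearMap.ext fun y => ?_
    obtain ⟨y₁, hy₁, y₂, hy₂, rfl⟩ := mem_sup.mp (hA.sup_eq_top ▸ mem_top : y ∈ A₁ ⊔ A₂)
    rw [map_add, hx₁ y₁ hy₁, hx₂ y₂ hy₂, add_zero, LinearMap.zero_apply]
  have hker₁ : (LinearMap.range Φ).dualCoannihilator.map A₁.subtype ≤ LinearMap.ker B := by
    rintro _ ⟨x, hx, rfl⟩
    refine hmem_ker x (h₁ x x.2) fun y hy => ?_
    rw [← hB.neg_eq, neg_eq_zero]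
    exact (mem_dualCoannihilator x).mp hx _ ⟨⟨y, hy⟩, rfl⟩
  have hker₂ : (LinearMap.ker Φ).map A₂.subtype ≤ LinearMap.ker B := by
    rintro _ ⟨a, ha, rfl⟩
    exact hmem_ker a (fun y hy => LinearMap.congr_fun ha ⟨y, hy⟩) (h₂ a a.2)
  have hdisj : Disjoint ((LinearMap.range Φ).dualCoannihilator.map A₁.subtype)
      ((LinearMap.ker Φ).map A₂.subtype) :=
    hA.disjoint.mono (map_subtype_le _ _) (map_subtype_le _ _)
  have hsum := finrank_sup_add_finrank_inf_eq
    ((LinearMap.range Φ).dualCoannihilator.map A₁.subtype) ((LinearMap.ker Φ).map A₂.subtype)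
  rw [hdisj.eq_bot, finrank_bot, add_zero, finrank_map_subtype_eq,
    finrank_map_subtype_eq] at hsum
  have hle := finrank_mono (sup_le hker₁ hker₂)
  have := Subspace.finrank_add_finrank_dualCoannihilator_eq (LinearMap.range Φ)
  have := LinearMap.finrank_range_add_finrank_ker Φ
  have := finrank_add_eq_of_isCompl hA
  linarith

variable {V ι : Type*} [AddCommGroup V] [Module ℝ V]

abbrev innerProductSpaceCore (g : LinearMap.BilinForm ℝ V) (hsym : ∀ x y, g x y = g y x)
    (hpos : ∀ x, x ≠ 0 → 0 < g x x) : InnerProductSpace.Core ℝ V where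
  inner x y := g x y
  conj_inner_symm x y := hsym y x
  re_inner_nonneg x := by
    rcases eq_or_ne x 0 with rfl | hx
    · simp
    · exact (hpos x hx).le
  definite x hx := by_contra fun h => (hpos x h).ne' hx
  add_left x y z := by simp
  smul_left x y r := by simp

theorem two_mul_finrank_orbitSpan_dualMap_le [FiniteDimensional ℝ V] (g : LinearMap.BilinForm ℝ V)
    (hsym : ∀ x y, g x y = g y x) (hpos : ∀ x, x ≠ 0 → 0 < g x x) {T : ι → End ℝ V}
    (hskew : ∀ i, g.IsSkewAdjoint (T i)) (hcomm : ∀ i j, Commute (T i) (T j)) (φ : Dual ℝ V) :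
    2 * finrank ℝ (orbitSpan (fun i => (T i).dualMap) φ) ≤ finrank ℝ V := by
  let _ : NormedAddCommGroup V := (g.innerProductSpaceCore hsym hpos).toNormedAddCommGroup
  let _ : InnerProductSpace ℝ V :=
    InnerProductSpace.ofCore (g.innerProductSpaceCore hsym hpos).toCore
  have hinj : Function.Injective g := by
    rw [← LinearMap.ker_eq_bot, eq_bot_iff]
    intro x hx
    by_contra h
    exact (hpos x h).ne' (LinearMap.congr_fun hx x)
  obtain ⟨w, rfl⟩ := (LinearMap.injective_iff_surjective_of_finrank_eq_finrank
    Subspace.dual_finrank_eq.symm).mp hinj φ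
  have hmap : (orbitSpan T w).map g = orbitSpan (fun i => -(T i).dualMap) (g w) :=
    orbitSpan_map g (fun i => by ext x y; simp [hskew i x y]) w
  calc 2 * finrank ℝ (orbitSpan (fun i => (T i).dualMap) (g w))
      = 2 * finrank ℝ ((orbitSpan T w).map g) := by rw [hmap, orbitSpan_neg]
    _ ≤ 2 * finrank ℝ (orbitSpan T w) := by gcongr; exact finrank_map_le g _
    _ ≤ finrank ℝ V :=
        two_mul_finrank_orbitSpan_le (fun i x y => (hskew i x y).trans (map_neg _ _)) hcomm w

end LinearMap.BilinForm

section LieBracketForm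

variable {R L : Type*} [CommRing R] [LieRing L] [LieAlgebra R L]

/-- The 2-form `-∂η`. -/
def lieBracketForm (η : Dual R L) : LinearMap.BilinForm R L :=
  LinearMap.mk₂ R (fun x y => η ⁅x, y⁆) (fun _ _ _ => by rw [add_lie, map_add])
    (fun _ _ _ => by rw [smul_lie, map_smul]) (fun _ _ _ => by rw [lie_add, map_add])
    (fun _ _ _ => by rw [lie_smul, map_smul])

@[simp]
theorem lieBracketForm_apply (η : Dual R L) (x y : L) : lieBracketForm η x y = η ⁅x, y⁆ := rfl

theorem lieBracketForm_isAlt (η : Dual R L) : (lieBracketForm η).IsAlt := fun x => by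
  rw [lieBracketForm_apply, lie_self, map_zero]

theorem LieAlgebra.commute_ad_of_lie_eq_zero {x y : L} (h : ⁅x, y⁆ = 0) :
    Commute (LieAlgebra.ad R L x) (LieAlgebra.ad R L y) := LinearMap.ext fun z => by
  simp only [Module.End.mul_apply, LieAlgebra.ad_apply]
  rw [leibniz_lie, h, zero_lie, zero_add]

end LieBracketForm

theorem IsContactForm.finrank_ker_lieBracketForm_le_one {L : Type*} [LieRing L] [LieAlgebra ℝ L]
    {η : Dual ℝ L} (hη : IsContactForm η) : finrank ℝ (LinearMap.ker (lieBracketForm η)) ≤ 1 := by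
  have hinj : Function.Injective (η ∘ₗ (LinearMap.ker (lieBracketForm η)).subtype) := by
    rw [← LinearMap.ker_eq_bot, eq_bot_iff]
    rintro ⟨x, hx⟩ hηx
    exact Subtype.ext (hη.2 x hηx fun y _ => LinearMap.congr_fun hx y)
  simpa using LinearMap.finrank_le_finrank_of_injective hinj

theorem flat_no_contact_general {L : Type*} [LieRing L] [LieAlgebra ℝ L]
    [FiniteDimensional ℝ L] (n : ℕ) (hn : 2 ≤ n) (hdim : finrank ℝ L = 2 * n + 1)
    (g : LinearMap.BilinForm ℝ L)
    (hgsym : ∀ x y : L, g x y = g y x)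
    (hgpos : ∀ x : L, x ≠ 0 → 0 < g x x)
    (A₁ A₂ : Submodule ℝ L) (hcompl : IsCompl A₁ A₂)
    (hideal : ∀ x : L, ∀ y ∈ A₁, ⁅x, y⁆ ∈ A₁)
    (hab₁ : ∀ x ∈ A₁, ∀ y ∈ A₁, ⁅x, y⁆ = (0 : L))
    (hab₂ : ∀ x ∈ A₂, ∀ y ∈ A₂, ⁅x, y⁆ = (0 : L))
    (hskew : ∀ a ∈ A₂, ∀ x ∈ A₁, ∀ y ∈ A₁, g ⁅a, x⁆ y + g x ⁅a, y⁆ = 0) :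
    ∀ η : Module.Dual ℝ L, ¬ IsContactForm η := by
  intro η hη
  let T (a : A₂) : End ℝ A₁ := (LieAlgebra.ad ℝ L a).restrict (hideal a)
  have hrange : LinearMap.range ((lieBracketForm η).compl₁₂ A₂.subtype A₁.subtype) =
      orbitSpan (fun a => (T a).dualMap) (η ∘ₗ A₁.subtype) := by
    refine (span_eq _).symm.trans ?_
    rw [LinearMap.coe_range]
    rfl
  have hbound := LinearMap.BilinForm.finrank_le_two_mul_finrank_range_add_finrank_ker
    (lieBracketForm_isAlt η) hcompl
    (fun x hx y hy => by rw [lieBracketForm_apply, hab₁ x hx y hy, map_zero])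
    (fun x hx y hy => by rw [lieBracketForm_apply, hab₂ x hx y hy, map_zero])
  have hhalf := (g.restrict A₁).two_mul_finrank_orbitSpan_dualMap_le
    (fun x y => hgsym x y) (fun x hx => hgpos x (by simpa using hx))
    (T := T) (fun a x y => (eq_neg_of_add_eq_zero_left (hskew a a.2 x x.2 y y.2)).trans
      (map_neg (g x) _).symm)
    (fun a b => LinearMap.restrict_commute
      (LieAlgebra.commute_ad_of_lie_eq_zero (hab₂ a a.2 b b.2)) _ _) (η ∘ₗ A₁.subtype)
  have hrank := LinearMap.finrank_range_le ((lieBracketForm η).compl₁₂ A₂.subtype A₁.subtype)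
  have hsplit := finrank_add_eq_of_isCompl hcompl
  rw [hrange] at hbound hrank
  have := hη.finrank_ker_lieBracketForm_le_one
  linarith

/-- A Lie algebra of odd dimension at least 5 which is flat in Milnor's sense
(`𝔤 = A₁ ⊕ A₂` orthogonally, `A₁` an abelian ideal, `A₂` an abelian subalgebra acting on
`A₁` by skew-adjoint maps for a positive-definite inner product) has no contact form. -/
theorem flat_no_contact {L : Type*} [LieRing L] [LieAlgebra ℝ L]
    [FiniteDimensional ℝ L] (n : ℕ) (hn : 2 ≤ n) (hdim : finrank ℝ L = 2 * n + 1)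
    (g : LinearMap.BilinForm ℝ L)
    (hgsym : ∀ x y : L, g x y = g y x)
    (hgpos : ∀ x : L, x ≠ 0 → 0 < g x x)
    (A₁ A₂ : Submodule ℝ L) (hcompl : IsCompl A₁ A₂)
    (horth : ∀ x ∈ A₁, ∀ y ∈ A₂, g x y = 0)
    (hideal : ∀ x : L, ∀ y ∈ A₁, ⁅x, y⁆ ∈ A₁)
    (hab₁ : ∀ x ∈ A₁, ∀ y ∈ A₁, ⁅x, y⁆ = (0 : L))
    (hab₂ : ∀ x ∈ A₂, ∀ y ∈ A₂, ⁅x, y⁆ = (0 : L))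
    (hskew : ∀ a ∈ A₂, ∀ x ∈ A₁, ∀ y ∈ A₁, g ⁅a, x⁆ y + g x ⁅a, y⁆ = 0) :
    ∀ η : Module.Dual ℝ L, ¬ IsContactForm η :=
  flat_no_contact_general n hn hdim g hgsym hgpos A₁ A₂ hcompl hideal hab₁ hab₂ hskew
end

section
/- Let 𝔤 be a Lie algebra such that for all x, y ∈ 𝔤 the bracket [x,y] lies in the span of x and y. Then there exists a linear form l on 𝔤 such that [x,y] = l(y)x − l(x)y for all x, y. -/
open Module

lemma eig_aux {V : Type*} [AddCommGroup V] [Module ℝ V] (f : V →ₗ[ℝ] V)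
    (hf : ∀ v, ∃ c : ℝ, f v = c • v) : ∃ c : ℝ, ∀ v, f v = c • v := by
  by_cases hV : ∀ v : V, v = 0
  · exact ⟨0, fun v => by rw [hV v]; simp⟩
  push_neg at hV
  obtain ⟨v₀, hv₀⟩ := hV
  obtain ⟨c₀, hc₀⟩ := hf v₀
  refine ⟨c₀, fun v => ?_⟩
  by_cases hv : ∃ t : ℝ, v = t • v₀
  · obtain ⟨t, rfl⟩ := hv
    rw [map_smul, hc₀, smul_comm]
  · obtain ⟨c, hc⟩ := hf v
    obtain ⟨d, hd⟩ := hf (v + v₀)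
    rw [map_add, hc, hc₀] at hd
    have key : (d - c) • v = (c₀ - d) • v₀ := by
      linear_combination (norm := module) -hd
    have hdc : d = c := by
      by_contra hne
      exact hv ⟨(d - c)⁻¹ * (c₀ - d), by
        rw [mul_smul, ← key, inv_smul_smul₀ (sub_ne_zero.mpr hne)]⟩
    rw [hdc, sub_self, zero_smul] at key
    have h0 : c₀ - c = 0 := by
      rcases smul_eq_zero.mp key.symm with h | h
      · exact h
      · exact absurd h hv₀
    rw [hc, sub_eq_zero.mp h0]

lemma exists_c' {L : Type*} [LieRing L] [LieAlgebra ℝ L]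
    (h : ∀ x y : L, ∃ a b : ℝ, ⁅x, y⁆ = a • x + b • y) (x : L) :
    ∃ c : ℝ, ∀ y : L, ⁅x, y⁆ - c • y ∈ Submodule.span ℝ ({x} : Set L) := by
  set S := Submodule.span ℝ ({x} : Set L) with hS
  have hx : x ∈ S := Submodule.mem_span_singleton_self x
  have hker : S ≤ LinearMap.ker (S.mkQ ∘ₗ ((LieAlgebra.ad ℝ L) x)) := by
    intro z hz
    obtain ⟨t, rfl⟩ := Submodule.mem_span_singleton.mp hz
    simp
  set g := S.liftQ _ hker with hgdef
  have hg : ∀ y : L, g (S.mkQ y) = S.mkQ ⁅x, y⁆ := by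
    intro y
    rw [hgdef, Submodule.mkQ_apply, Submodule.liftQ_apply]
    simp
  have heig : ∀ q, ∃ c : ℝ, g q = c • q := by
    intro q
    obtain ⟨y, rfl⟩ := S.mkQ_surjective q
    obtain ⟨a, b, hab⟩ := h x y
    refine ⟨b, ?_⟩
    rw [hg, hab]
    have : S.mkQ x = 0 := by rwa [Submodule.mkQ_apply, Submodule.Quotient.mk_eq_zero]
    rw [map_add, map_smul, map_smul, this, smul_zero, zero_add]
  obtain ⟨c, hc⟩ := eig_aux g heig
  refine ⟨c, fun y => ?_⟩
  have h2 := hc (S.mkQ y)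
  rw [hg, ← map_smul, ← sub_eq_zero, ← map_sub, Submodule.mkQ_apply,
    Submodule.Quotient.mk_eq_zero] at h2
  exact h2

/-- If every bracket `⁅x,y⁆` lies in the span of `x` and `y`, then there is a linear form
`l` with `⁅x,y⁆ = l y • x - l x • y`. -/
theorem bracket_in_span_exists_form {L : Type*} [LieRing L] [LieAlgebra ℝ L]
    [FiniteDimensional ℝ L] (hdim : 2 ≤ finrank ℝ L)
    (h : ∀ x y : L, ∃ a b : ℝ, ⁅x, y⁆ = a • x + b • y) :
    ∃ l : Module.Dual ℝ L, ∀ x y : L, ⁅x, y⁆ = l y • x - l x • y := by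
  choose c hc using exists_c' h
  set ℓ : L → ℝ := fun x => -c x with hℓdef
  -- the defining property, rewritten
  have hP : ∀ x y : L, ∃ a : ℝ, ⁅x, y⁆ = a • x - ℓ x • y := by
    intro x y
    obtain ⟨a, ha⟩ := Submodule.mem_span_singleton.mp (hc x y)
    exact ⟨a, by rw [hℓdef]; simp only [neg_smul]; linear_combination (norm := module) -ha⟩
  -- for every x there is y outside the span of x
  have hex : ∀ x : L, ∃ y : L, ¬∃ t : ℝ, y = t • x := by
    intro x
    by_contra hcon
    push_neg at hcon
    have : finrank ℝ L ≤ 1 := finrank_le_one x fun w => by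
      obtain ⟨t, ht⟩ := hcon w; exact ⟨t, ht.symm⟩
    omega
  -- independence helper
  have hInd : ∀ x y : L, x ≠ 0 → (¬∃ t : ℝ, y = t • x) →
      ∀ a b : ℝ, a • x + b • y = 0 → a = 0 ∧ b = 0 := by
    intro x y hx hy a b hab
    by_cases hb : b = 0
    · subst hb
      rw [zero_smul, add_zero] at hab
      exact ⟨(smul_eq_zero.mp hab).resolve_right hx, rfl⟩
    · exfalso
      apply hy
      refine ⟨b⁻¹ * (-a), ?_⟩
      have : b • y = (-a) • x := by linear_combination (norm := module) hab
      rw [mul_smul, ← this, inv_smul_smul₀ hb]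
  -- key formula for independent vectors
  have hA : ∀ x y : L, x ≠ 0 → (¬∃ t : ℝ, y = t • x) → ⁅x, y⁆ = ℓ y • x - ℓ x • y := by
    intro x y hx hy
    obtain ⟨a, ha⟩ := hP x y
    obtain ⟨a', ha'⟩ := hP y x
    have hskew : ⁅x, y⁆ = ℓ y • x - a' • y := by
      have := (lie_skew x y).symm
      rw [ha'] at this
      linear_combination (norm := module) this
    have h0 : (a - ℓ y) • x + (a' - ℓ x) • y = 0 := by
      have := ha.symm.trans hskew
      linear_combination (norm := module) this
    obtain ⟨h1, h2⟩ := hInd x y hx hy _ _ h0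
    rw [ha, sub_eq_zero.mp h1]
  -- ℓ 0 = 0
  have hy0 : ∀ y : L, (¬∃ t : ℝ, y = t • (0:L)) → y ≠ 0 := by
    intro y hy hy0
    exact hy ⟨0, by rw [hy0, smul_zero]⟩
  have hzero : ℓ 0 = 0 := by
    obtain ⟨y, hy⟩ := hex (0 : L)
    obtain ⟨a, ha⟩ := hP 0 y
    have : ℓ 0 • y = 0 := by
      rw [zero_lie, smul_zero] at ha
      linear_combination (norm := module) ha
    exact (smul_eq_zero.mp this).resolve_right (hy0 y hy)
  -- homogeneity
  have hsmul : ∀ (t : ℝ) (x : L), ℓ (t • x) = t * ℓ x := by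
    intro t x
    by_cases hx : x = 0
    · rw [hx, smul_zero, hzero, mul_zero]
    by_cases ht : t = 0
    · rw [ht, zero_smul, hzero, zero_mul]
    obtain ⟨y, hy⟩ := hex x
    have hyne : y ≠ 0 := fun h0 => hy ⟨0, by rw [h0, zero_smul]⟩
    have hy' : ¬∃ s : ℝ, y = s • (t • x) := by
      rintro ⟨s, hs⟩
      exact hy ⟨s * t, by rw [hs, smul_smul]⟩
    have htx : t • x ≠ 0 := smul_ne_zero ht hx
    have e1 := hA x y hx hy
    have e2 := hA (t • x) y htx hy'
    have e3 : ⁅t • x, y⁆ = t • ⁅x, y⁆ := smul_lie t x y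
    rw [e1] at e3
    rw [e3] at e2
    have h0 : (ℓ (t • x) - t * ℓ x) • y = 0 := by
      linear_combination (norm := module) e2
    have := (smul_eq_zero.mp h0).resolve_right hyne
    linarith [sub_eq_zero.mp this]
  -- additivity
  have hadd : ∀ x y : L, ℓ (x + y) = ℓ x + ℓ y := by
    intro x y
    by_cases hx : x = 0
    · rw [hx, zero_add, hzero, zero_add]
    by_cases hy : ∃ t : ℝ, y = t • x
    · obtain ⟨t, rfl⟩ := hy
      have hxy : x + t • x = (1 + t) • x := by module
      rw [hxy, hsmul, hsmul]
      ring
    · have hxy : ¬∃ s : ℝ, x + y = s • x := by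
        rintro ⟨s, hs⟩
        exact hy ⟨s - 1, by rw [sub_smul, one_smul, ← hs]; abel⟩
      have e1 := hA x y hx hy
      have e2 := hA x (x + y) hx hxy
      have e3 : ⁅x, x + y⁆ = ⁅x, y⁆ := by rw [lie_add, lie_self, zero_add]
      rw [e3, e1] at e2
      have h0 : (ℓ (x + y) - ℓ x - ℓ y) • x = 0 := by
        linear_combination (norm := module) -e2
      have := (smul_eq_zero.mp h0).resolve_right hx
      linarith [sub_eq_zero.mp (by linear_combination this : ℓ (x + y) - (ℓ x + ℓ y) = 0)]
  refine ⟨{ toFun := ℓ, map_add' := hadd, map_smul' := fun t x => hsmul t x }, ?_⟩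
  intro x y
  simp only [LinearMap.coe_mk, AddHom.coe_mk]
  by_cases hx : x = 0
  · rw [hx, zero_lie, smul_zero, hzero, zero_smul, sub_zero]
  by_cases hy : ∃ t : ℝ, y = t • x
  · obtain ⟨t, rfl⟩ := hy
    rw [lie_smul, lie_self, smul_zero, hsmul]
    module
  · exact hA x y hx hy
end

section
/- Let 𝔤 be a Lie algebra with a linear form l such that [x,y] = l(y)x − l(x)y for all x, y. Then for every linear form α on 𝔤, ∂α ∧ α = 0 and (∂α)^p = 0 for all p ≥ 2; in particular 𝔤 carries no contact form if dim 𝔤 ≥ 3 and no exact symplectic form if dim 𝔤 ≥ 4. -/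
open Module

lemma common_kernel {L : Type*} [AddCommGroup L] [Module ℝ L] [FiniteDimensional ℝ L]
    (h3 : 3 ≤ finrank ℝ L) (f g : Module.Dual ℝ L) :
    ∃ x : L, x ≠ 0 ∧ f x = 0 ∧ g x = 0 := by
  set F : L →ₗ[ℝ] ℝ × ℝ := f.prod g with hF
  have hrange : finrank ℝ (LinearMap.range F) ≤ 2 := by
    have := Submodule.finrank_le (LinearMap.range F)
    simpa [finrank_prod] using this
  have hk := LinearMap.finrank_range_add_finrank_ker F
  have hker : 1 ≤ finrank ℝ (LinearMap.ker F) := by omega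
  have hne : LinearMap.ker F ≠ ⊥ := by
    intro hbot
    rw [hbot, finrank_bot] at hker; omega
  obtain ⟨x, hx, hxne⟩ := Submodule.exists_mem_ne_zero_of_ne_bot hne
  have := LinearMap.mem_ker.mp hx
  have h1 : f x = 0 := congrArg Prod.fst this
  have h2 : g x = 0 := congrArg Prod.snd this
  exact ⟨x, hxne, h1, h2⟩

/-- If `⁅x,y⁆ = l y • x - l x • y`, then for every linear form `α` one has `∂α ∧ α = 0`
and `∂α ∧ ∂α = 0` (hence all powers `(∂α)^p`, `p ≥ 2`, vanish); in particular there is no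
contact form if `dim L ≥ 3` and no exact symplectic form if `dim L ≥ 4`. -/
theorem special_bracket_no_contact {L : Type*} [LieRing L] [LieAlgebra ℝ L]
    [FiniteDimensional ℝ L] (l : Module.Dual ℝ L)
    (hl : ∀ x y : L, ⁅x, y⁆ = l y • x - l x • y) :
    (∀ α : Module.Dual ℝ L, ∀ x y z : L,
      (-α ⁅x, y⁆) * α z - (-α ⁅x, z⁆) * α y + (-α ⁅y, z⁆) * α x = 0) ∧
    (∀ α : Module.Dual ℝ L, ∀ x y z w : L,
      (-α ⁅x, y⁆) * (-α ⁅z, w⁆) - (-α ⁅x, z⁆) * (-α ⁅y, w⁆)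
        + (-α ⁅x, w⁆) * (-α ⁅y, z⁆) = 0) ∧
    (3 ≤ finrank ℝ L → ∀ η : Module.Dual ℝ L, ¬ IsContactForm η) ∧
    (4 ≤ finrank ℝ L → ∀ α : Module.Dual ℝ L, ¬ IsExactSymplecticForm α) := by
  have key : ∀ (α : Module.Dual ℝ L) (x y : L), α ⁅x, y⁆ = l y * α x - l x * α y := by
    intro α x y; rw [hl]; simp [mul_comm]
  refine ⟨?_, ?_, ?_, ?_⟩
  · intro α x y z; simp only [key]; ring
  · intro α x y z w; simp only [key]; ring
  · intro h3 η ⟨_, hnd⟩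
    obtain ⟨x, hxne, hηx, hlx⟩ := common_kernel h3 η l
    exact hxne (hnd x hηx (fun y _ => by rw [key, hηx, hlx]; ring))
  · intro h4 α hs
    obtain ⟨x, hxne, hαx, hlx⟩ := common_kernel (by omega) α l
    exact hxne (hs x (fun y => by rw [key, hαx, hlx]; ring))
end

section
/- Any two Lie algebras of the same dimension n+1 ≥ 2 in which every bracket [x,y] is a linear combination of x and y, and which are non-abelian, are isomorphic: each is isomorphic to the semidirect product ℝⁿ ⋊ ℝe₁ where ad_{e₁} acts on the abelian ideal ℝⁿ as minus the identity. -/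
open Module

section helpers
variable {V : Type*} [AddCommGroup V] [Module ℝ V]

lemma span2 {x y : V} {a b : ℝ} (h : a • x + b • y = 0) (hb : b ≠ 0) :
    y ∈ Submodule.span ℝ {x} := by
  rw [Submodule.mem_span_singleton]
  refine ⟨-(b⁻¹ * a), ?_⟩
  have h' : b • y = (-a) • x := by linear_combination (norm := module) h
  calc (-(b⁻¹ * a)) • x = b⁻¹ • ((-a) • x) := by rw [smul_smul]; ring_nf
    _ = b⁻¹ • (b • y) := by rw [h']
    _ = y := inv_smul_smul₀ hb y

lemma span3 {x y z : V} {a b c : ℝ} (h : a • x + b • y + c • z = 0) (hc : c ≠ 0) :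
    z ∈ Submodule.span ℝ {x, y} := by
  rw [Submodule.mem_span_pair]
  refine ⟨-(c⁻¹ * a), -(c⁻¹ * b), ?_⟩
  have h' : c • z = (-a) • x + (-b) • y := by linear_combination (norm := module) h
  calc (-(c⁻¹ * a)) • x + (-(c⁻¹ * b)) • y = c⁻¹ • ((-a) • x + (-b) • y) := by
        rw [smul_add, smul_smul, smul_smul]; ring_nf
    _ = c⁻¹ • (c • z) := by rw [h']
    _ = z := inv_smul_smul₀ hc z

lemma coeff2 {x y : V} {a b : ℝ} (h : a • x + b • y = 0) (hy : y ∉ Submodule.span ℝ {x})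
    (hx : x ≠ 0) : a = 0 ∧ b = 0 := by
  have hb : b = 0 := by
    by_contra hb
    exact hy (span2 h hb)
  refine ⟨?_, hb⟩
  rw [hb, zero_smul, add_zero, smul_eq_zero] at h
  tauto

lemma exists_notMem_span (hd : 2 ≤ finrank ℝ V) (x : V) :
    ∃ y : V, y ∉ Submodule.span ℝ {x} := by
  by_contra h
  push_neg at h
  have ht : Submodule.span ℝ {x} = ⊤ := eq_top_iff.2 fun y _ => h y
  have h1 : finrank ℝ V ≤ 1 := by
    rw [← finrank_top ℝ V, ← ht]
    exact (finrank_span_le_card ({x} : Set V)).trans (by simp)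
  omega

end helpers

section form
variable {L : Type*} [LieRing L] [LieAlgebra ℝ L] [FiniteDimensional ℝ L]

lemma exists_scalar (hd : 2 ≤ finrank ℝ L)
    (hs : ∀ x y : L, ∃ a b : ℝ, ⁅x, y⁆ = a • x + b • y) (x : L) :
    ∃ s : ℝ, ∀ y : L, ∃ t : ℝ, ⁅x, y⁆ = t • x + s • y := by
  by_cases hx : x = 0
  · exact ⟨0, fun y => ⟨0, by simp [hx]⟩⟩
  obtain ⟨y₀, hy₀⟩ := exists_notMem_span hd x
  obtain ⟨t₀, s, h0⟩ := hs x y₀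
  refine ⟨s, fun y => ?_⟩
  by_cases hy : y ∈ Submodule.span ℝ {x}
  · obtain ⟨r, rfl⟩ := Submodule.mem_span_singleton.1 hy
    refine ⟨-(s * r), ?_⟩
    have : ⁅x, r • x⁆ = (0 : L) := by simp
    rw [this]
    module
  by_cases hy2 : y ∈ Submodule.span ℝ {x, y₀}
  · obtain ⟨α, β, hy'⟩ := Submodule.mem_span_pair.1 hy2
    have hβ : β ≠ 0 := by
      rintro rfl
      apply hy
      rw [← hy']
      simpa using Submodule.smul_mem _ α (Submodule.mem_span_singleton_self x)
    refine ⟨β * t₀ - s * α, ?_⟩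
    have hb : ⁅x, y⁆ = (β * t₀) • x + (β * s) • y₀ := by
      rw [← hy', lie_add, lie_smul, lie_smul, lie_self, smul_zero, zero_add, h0]
      module
    rw [hb, ← hy']
    module
  · obtain ⟨a, b, hab⟩ := hs x y
    obtain ⟨a', b', hab'⟩ := hs x (y + y₀)
    have hsum : ⁅x, y + y₀⁆ = (a + t₀) • x + b • y + s • y₀ := by
      rw [lie_add, hab, h0]; module
    have hzero : (a + t₀ - a') • x + (s - b') • y₀ + (b - b') • y = 0 := by
      rw [hab'] at hsum
      linear_combination (norm := module) -hsum
    have hbb : b - b' = 0 := by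
      by_contra hbb
      exact hy2 (span3 hzero hbb)
    rw [hbb, zero_smul, add_zero] at hzero
    have h2 := (coeff2 hzero hy₀ hx).2
    have hsb : b = s := by
      have hb' : b = b' := by linarith [sub_eq_zero.1 hbb]
      have : s = b' := by
        have := sub_eq_zero.1 h2
        linarith [this]
      linarith
    exact ⟨a, by rw [hab, hsb]⟩

lemma exists_form (hd : 2 ≤ finrank ℝ L)
    (hs : ∀ x y : L, ∃ a b : ℝ, ⁅x, y⁆ = a • x + b • y) :
    ∃ l : Module.Dual ℝ L, (∀ x y : L, ⁅x, y⁆ = l y • x - l x • y) := by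
  choose c hc using exists_scalar hd hs
  have hnt : Nontrivial L := (finrank_pos_iff (R := ℝ)).1 (by omega)
  obtain ⟨v, hv⟩ := exists_ne (0 : L)
  have hc0 : c 0 = 0 := by
    obtain ⟨t, ht⟩ := hc 0 v
    simp only [lie_self, zero_lie, smul_zero, zero_add] at ht
    have := ht.symm
    rcases smul_eq_zero.1 this with h | h
    · exact h
    · exact absurd h hv
  have hhom : ∀ (r : ℝ) (x : L), c (r • x) = r * c x := by
    intro r x
    by_cases hx : x = 0
    · simp [hx, hc0]
    by_cases hr : r = 0
    · simp [hr, hc0]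
    obtain ⟨y, hy⟩ := exists_notMem_span hd x
    obtain ⟨t, ht⟩ := hc (r • x) y
    obtain ⟨t', ht'⟩ := hc x y
    have h1 : ⁅r • x, y⁆ = (r * t') • x + (r * c x) • y := by
      rw [smul_lie, ht']; module
    have h2 : (t * r - r * t') • x + (c (r • x) - r * c x) • y = 0 := by
      rw [h1] at ht
      linear_combination (norm := module) -ht
    have := (coeff2 h2 hy hx).2
    linarith [sub_eq_zero.1 this]
  have key : ∀ x y : L, ⁅x, y⁆ = c x • y - c y • x := by
    intro x y
    by_cases hy : y ∈ Submodule.span ℝ {x}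
    · obtain ⟨r, rfl⟩ := Submodule.mem_span_singleton.1 hy
      have h1 : ⁅x, r • x⁆ = (0 : L) := by simp
      rw [h1, hhom]
      module
    by_cases hx : x = 0
    · subst hx
      rw [zero_lie, hc0, zero_smul, smul_zero, sub_zero]
    obtain ⟨t, ht⟩ := hc x y
    obtain ⟨t', ht'⟩ := hc y x
    have hsum : (t + c y) • x + (c x + t') • y = 0 := by
      have : ⁅x, y⁆ + ⁅y, x⁆ = (0 : L) := by rw [← lie_skew x y, neg_add_cancel]
      rw [ht, ht'] at this
      linear_combination (norm := module) this
    obtain ⟨h1, h2⟩ := coeff2 hsum hy hx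
    rw [ht]
    have : t = -c y := by linarith
    rw [this]
    module
  have hadd : ∀ x y : L, c (x + y) = c x + c y := by
    intro x y
    have h1 : ⁅x + y, v⁆ = (c (x + y)) • v - c v • (x + y) := key _ _
    have h2 : ⁅x + y, v⁆ = (c x + c y) • v - c v • (x + y) := by
      rw [add_lie, key x v, key y v]; module
    have h3 : (c (x + y) - (c x + c y)) • v = 0 := by
      rw [h1] at h2
      linear_combination (norm := module) h2
    rcases smul_eq_zero.1 h3 with h | h
    · linarith [h]
    · exact absurd h hv
  refine ⟨{ toFun := fun x => -c x,
            map_add' := fun x y => by show -c (x + y) = -c x + -c y; rw [hadd]; ring,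
            map_smul' := fun r x => by show -c (r • x) = r * -c x; rw [hhom]; ring }, ?_⟩
  intro x y
  simp only [LinearMap.coe_mk, AddHom.coe_mk]
  rw [key]
  module

lemma ker_finrank (l : Module.Dual ℝ L) (e : L) (he : l e = 1) :
    finrank ℝ (LinearMap.ker l) + 1 = finrank ℝ L := by
  have hsurj : Function.Surjective l := fun r => ⟨r • e, by simp [he]⟩
  have h := LinearMap.finrank_range_add_finrank_ker l
  rw [LinearMap.range_eq_top.2 hsurj, finrank_top, finrank_self] at h
  omega

lemma exists_one (l : Module.Dual ℝ L)
    (hl : ∀ x y : L, ⁅x, y⁆ = l y • x - l x • y)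
    (hna : ∃ x y : L, ⁅x, y⁆ ≠ 0) : ∃ e : L, l e = 1 := by
  obtain ⟨x, y, hxy⟩ := hna
  have h : l x ≠ 0 ∨ l y ≠ 0 := by
    by_contra h
    push_neg at h
    exact hxy (by rw [hl, h.1, h.2]; simp)
  rcases h with h | h
  · exact ⟨(l x)⁻¹ • x, by simp [inv_mul_cancel₀ h]⟩
  · exact ⟨(l y)⁻¹ • y, by simp [inv_mul_cancel₀ h]⟩

end form

section equivsec
variable {L₁ L₂ : Type*}
    [LieRing L₁] [LieAlgebra ℝ L₁] [FiniteDimensional ℝ L₁]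
    [LieRing L₂] [LieAlgebra ℝ L₂] [FiniteDimensional ℝ L₂]

lemma equiv_of_forms (l₁ : Module.Dual ℝ L₁) (l₂ : Module.Dual ℝ L₂)
    (hl₁ : ∀ x y : L₁, ⁅x, y⁆ = l₁ y • x - l₁ x • y)
    (hl₂ : ∀ x y : L₂, ⁅x, y⁆ = l₂ y • x - l₂ x • y)
    (e₁ : L₁) (he₁ : l₁ e₁ = 1) (e₂ : L₂) (he₂ : l₂ e₂ = 1)
    (hdim : finrank ℝ L₁ = finrank ℝ L₂) : Nonempty (L₁ ≃ₗ⁅ℝ⁆ L₂) := by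
  set K₁ := LinearMap.ker l₁ with hK₁
  set K₂ := LinearMap.ker l₂ with hK₂
  have hrk : finrank ℝ K₁ = finrank ℝ K₂ := by
    have a1 := ker_finrank l₁ e₁ he₁
    have a2 := ker_finrank l₂ e₂ he₂
    rw [hK₁, hK₂]
    omega
  obtain ⟨g⟩ : Nonempty (K₁ ≃ₗ[ℝ] K₂) := ⟨LinearEquiv.ofFinrankEq _ _ hrk⟩
  have hp₁mem : ∀ x : L₁, x - l₁ x • e₁ ∈ K₁ := fun x => by
    rw [hK₁, LinearMap.mem_ker, map_sub, map_smul, he₁, smul_eq_mul, mul_one, sub_self]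
  have hp₂mem : ∀ x : L₂, x - l₂ x • e₂ ∈ K₂ := fun x => by
    rw [hK₂, LinearMap.mem_ker, map_sub, map_smul, he₂, smul_eq_mul, mul_one, sub_self]
  set p₁ : L₁ →ₗ[ℝ] K₁ :=
    LinearMap.codRestrict K₁ (LinearMap.id - l₁.smulRight e₁) (fun x => hp₁mem x) with hp₁
  set p₂ : L₂ →ₗ[ℝ] K₂ :=
    LinearMap.codRestrict K₂ (LinearMap.id - l₂.smulRight e₂) (fun x => hp₂mem x) with hp₂
  set F : L₁ →ₗ[ℝ] L₂ := K₂.subtype ∘ₗ g.toLinearMap ∘ₗ p₁ + l₁.smulRight e₂ with hF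
  set G : L₂ →ₗ[ℝ] L₁ := K₁.subtype ∘ₗ g.symm.toLinearMap ∘ₗ p₂ + l₂.smulRight e₁ with hG
  have hFx : ∀ x : L₁, F x = (g (p₁ x) : L₂) + l₁ x • e₂ := fun x => rfl
  have hGx : ∀ y : L₂, G y = (g.symm (p₂ y) : L₁) + l₂ y • e₁ := fun y => rfl
  have hp₁x : ∀ x : L₁, (p₁ x : L₁) = x - l₁ x • e₁ := fun x => rfl
  have hp₂x : ∀ y : L₂, (p₂ y : L₂) = y - l₂ y • e₂ := fun y => rfl
  have hl₂F : ∀ x : L₁, l₂ (F x) = l₁ x := by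
    intro x
    rw [hFx, map_add, map_smul, he₂]
    have : l₂ ((g (p₁ x) : L₂)) = 0 := (g (p₁ x)).2
    rw [this, zero_add, smul_eq_mul, mul_one]
  have hl₁G : ∀ y : L₂, l₁ (G y) = l₂ y := by
    intro y
    rw [hGx, map_add, map_smul, he₁]
    have : l₁ ((g.symm (p₂ y) : L₁)) = 0 := (g.symm (p₂ y)).2
    rw [this, zero_add, smul_eq_mul, mul_one]
  have hGF : ∀ x : L₁, G (F x) = x := by
    intro x
    have h1 : p₂ (F x) = g (p₁ x) := by
      apply Subtype.ext
      rw [hp₂x, hl₂F, hFx]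
      abel
    rw [hGx, h1, hl₂F, LinearEquiv.symm_apply_apply, hp₁x]
    abel
  have hFG : ∀ y : L₂, F (G y) = y := by
    intro y
    have h1 : p₁ (G y) = g.symm (p₂ y) := by
      apply Subtype.ext
      rw [hp₁x, hl₁G, hGx]
      abel
    rw [hFx, h1, hl₁G, LinearEquiv.apply_symm_apply, hp₂x]
    abel
  have hlie : ∀ x y : L₁, F ⁅x, y⁆ = ⁅F x, F y⁆ := by
    intro x y
    rw [hl₁ x y, map_sub, map_smul, map_smul, hl₂ (F x) (F y), hl₂F, hl₂F]
  exact ⟨{ toLinearMap := F, map_lie' := fun {x y} => hlie x y,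
           invFun := G, left_inv := hGF, right_inv := hFG }⟩

end equivsec


/-- Any two non-abelian Lie algebras of the same dimension `n+1 ≥ 2` in which every
bracket lies in the span of its arguments are isomorphic; each is the semidirect product
of a codimension-1 abelian ideal and a line `ℝ e` with `ad e = -id` on the ideal. -/
theorem bracket_in_span_unique {L₁ L₂ : Type*}
    [LieRing L₁] [LieAlgebra ℝ L₁] [FiniteDimensional ℝ L₁]
    [LieRing L₂] [LieAlgebra ℝ L₂] [FiniteDimensional ℝ L₂]
    (n : ℕ) (hn : 1 ≤ n) (h₁ : finrank ℝ L₁ = n + 1) (h₂ : finrank ℝ L₂ = n + 1)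
    (hs₁ : ∀ x y : L₁, ∃ a b : ℝ, ⁅x, y⁆ = a • x + b • y)
    (hs₂ : ∀ x y : L₂, ∃ a b : ℝ, ⁅x, y⁆ = a • x + b • y)
    (hna₁ : ∃ x y : L₁, ⁅x, y⁆ ≠ 0) (hna₂ : ∃ x y : L₂, ⁅x, y⁆ ≠ 0) :
    Nonempty (L₁ ≃ₗ⁅ℝ⁆ L₂) ∧
    ∃ (A : LieIdeal ℝ L₁) (e : L₁), finrank ℝ ↥A = n ∧
      (∀ x ∈ A, ∀ y ∈ A, ⁅x, y⁆ = (0 : L₁)) ∧ (∀ x ∈ A, ⁅e, x⁆ = -x) := by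
  have hd₁ : 2 ≤ finrank ℝ L₁ := by omega
  have hd₂ : 2 ≤ finrank ℝ L₂ := by omega
  obtain ⟨l₁, hl₁⟩ := exists_form hd₁ hs₁
  obtain ⟨l₂, hl₂⟩ := exists_form hd₂ hs₂
  obtain ⟨e₁, he₁⟩ := exists_one l₁ hl₁ hna₁
  obtain ⟨e₂, he₂⟩ := exists_one l₂ hl₂ hna₂
  constructor
  · exact equiv_of_forms l₁ l₂ hl₁ hl₂ e₁ he₁ e₂ he₂ (by omega)
  · refine ⟨{ toSubmodule := LinearMap.ker l₁, lie_mem := ?_ }, e₁, ?_, ?_, ?_⟩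
    · intro x m hm
      have hm' : l₁ m = 0 := hm
      show ⁅x, m⁆ ∈ LinearMap.ker l₁
      rw [LinearMap.mem_ker, hl₁, map_sub, map_smul, map_smul, hm']
      simp
    · have := ker_finrank l₁ e₁ he₁
      have hco : finrank ℝ (↥(LinearMap.ker l₁)) = n := by omega
      exact hco
    · intro x hx y hy
      have hx' : l₁ x = 0 := hx
      have hy' : l₁ y = 0 := hy
      rw [hl₁, hx', hy']
      simp
    · intro x hx
      have hx' : l₁ x = 0 := hx
      rw [hl₁, hx', he₁]
      simp
end

section
/- If a solvable Lie algebra 𝔤 of dimension 2n+1 with contact form η has derived ideal 𝔑 = [𝔤,𝔤] of codimension 1, then the restriction α of η to 𝔑 satisfies (∂α)^{n-1} ∧ α ≠ 0 on 𝔑, i.e. the (2n-1)-form (∂α)^{n-1} ∧ α is nonzero on 𝔑. -/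
open Module

/-- If a solvable contact Lie algebra of dimension `2n+1` has derived ideal
`𝔑 = [𝔤,𝔤]` of codimension 1, then `α := η|_𝔑` satisfies `(∂α)^(n-1) ∧ α ≠ 0` on `𝔑`:
equivalently, `α ≠ 0` and the radical of `∂α` restricted to the kernel of `α` in `𝔑` is
contained in a line. -/
theorem solvable_codim_one_derived_contact_type {L : Type*} [LieRing L] [LieAlgebra ℝ L]
    [FiniteDimensional ℝ L] [LieAlgebra.IsSolvable L]
    (n : ℕ) (hn : 1 ≤ n) (hdim : finrank ℝ L = 2 * n + 1)
    (η : Module.Dual ℝ L) (hη : IsContactForm η)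
    (hN : finrank ℝ ↥(LieAlgebra.derivedSeries ℝ L 1) = 2 * n) :
    (∃ x ∈ LieAlgebra.derivedSeries ℝ L 1, η x ≠ 0) ∧
    ∃ z ∈ LieAlgebra.derivedSeries ℝ L 1,
      ∀ x ∈ LieAlgebra.derivedSeries ℝ L 1, η x = 0 →
        (∀ y ∈ LieAlgebra.derivedSeries ℝ L 1, η y = 0 → η ⁅x, y⁆ = 0) →
        ∃ t : ℝ, x = t • z := by
  obtain ⟨hη0, hcontact⟩ := hη
  set N := LieAlgebra.derivedSeries ℝ L 1 with hNdef
  have hbracket : ∀ a b : L, ⁅a, b⁆ ∈ N := by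
    intro a b
    rw [hNdef, LieAlgebra.derivedSeries_def, LieAlgebra.derivedSeriesOfIdeal_succ]
    exact LieSubmodule.lie_mem_lie (LieSubmodule.mem_top _) (LieSubmodule.mem_top _)
  -- Part 1: η does not vanish on N
  have part1 : ∃ x ∈ N, η x ≠ 0 := by
    by_contra h
    push_neg at h
    have hker : ∀ x : L, η x = 0 → x = 0 := by
      intro x hx
      exact hcontact x hx (fun y hy => h _ (hbracket x y))
    have hinj : Function.Injective η := by
      intro a b hab
      have : η (a - b) = 0 := by simp [map_sub, hab]
      exact sub_eq_zero.mp (hker _ this)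
    have hle : finrank ℝ L ≤ finrank ℝ ℝ := LinearMap.finrank_le_finrank_of_injective hinj
    rw [hdim, finrank_self] at hle
    omega
  refine ⟨part1, ?_⟩
  -- Part 2
  by_cases hR : ∃ z ∈ N, η z = 0 ∧ (∀ y ∈ N, η y = 0 → η ⁅z, y⁆ = 0) ∧ z ≠ 0
  · obtain ⟨z, hzN, hzη, hzrad, hz0⟩ := hR
    refine ⟨z, hzN, ?_⟩
    intro x hxN hxη hxrad
    -- find w with η w = 0 and η ⁅z, w⁆ ≠ 0
    have hw : ∃ w : L, η w = 0 ∧ η ⁅z, w⁆ ≠ 0 := by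
      by_contra h
      push_neg at h
      exact hz0 (hcontact z hzη h)
    obtain ⟨w, hwη, hwz⟩ := hw
    have hwN : w ∉ N := fun hwN => hwz (hzrad w hwN hwη)
    -- N ⊔ span w = ⊤
    have hsup : (N.toSubmodule ⊔ (ℝ ∙ w)) = ⊤ := by
      apply Submodule.eq_top_of_finrank_eq
      have hlt : N.toSubmodule < N.toSubmodule ⊔ (ℝ ∙ w) := by
        refine lt_of_le_of_ne le_sup_left ?_
        intro heq
        apply hwN
        have hw' : w ∈ N.toSubmodule := by
          rw [heq]; exact (le_sup_right : (ℝ ∙ w) ≤ _) (Submodule.mem_span_singleton_self w)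
        exact hw'
      have h1 := Submodule.finrank_lt_finrank_of_lt hlt
      have h2 : finrank ℝ N.toSubmodule = 2 * n := hN
      have h3 : finrank ℝ (N.toSubmodule ⊔ (ℝ ∙ w) : Submodule ℝ L) ≤ finrank ℝ L :=
        Submodule.finrank_le _
      omega
    -- decompose: any y with η y = 0 is m + c • w with m ∈ N, η m = 0
    have hdecomp : ∀ y : L, η y = 0 → ∃ m ∈ N, ∃ c : ℝ, η m = 0 ∧ y = m + c • w := by
      intro y hy
      have : y ∈ (N.toSubmodule ⊔ (ℝ ∙ w)) := hsup ▸ Submodule.mem_top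
      obtain ⟨m, hm, s, hs, hms⟩ := Submodule.mem_sup.mp this
      obtain ⟨c, rfl⟩ := Submodule.mem_span_singleton.mp hs
      refine ⟨m, hm, c, ?_, hms.symm⟩
      have : η y = η m + c * η w := by rw [← hms]; simp [map_add, map_smul]
      rw [hy, hwη] at this
      linarith
    refine ⟨η ⁅x, w⁆ / η ⁅z, w⁆, ?_⟩
    set t := η ⁅x, w⁆ / η ⁅z, w⁆ with ht
    have hu : x - t • z = 0 := by
      apply hcontact
      · simp [map_sub, map_smul, hxη, hzη]
      · intro y hy
        obtain ⟨m, hmN, c, hmη, rfl⟩ := hdecomp y hy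
        have e1 : η ⁅x, m⁆ = 0 := hxrad m hmN hmη
        have e2 : η ⁅z, m⁆ = 0 := hzrad m hmN hmη
        have e3 : η ⁅x, w⁆ - t * η ⁅z, w⁆ = 0 := by
          rw [ht]; field_simp; ring
        have : η ⁅x - t • z, m + c • w⁆ =
            (η ⁅x, m⁆ - t * η ⁅z, m⁆) + c * (η ⁅x, w⁆ - t * η ⁅z, w⁆) := by
          simp only [sub_lie, smul_lie, lie_add, lie_smul, map_sub, map_add, map_smul,
            smul_eq_mul]
        rw [this, e1, e2, e3]; ring
    refine sub_eq_zero.mp hu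
  · push_neg at hR
    refine ⟨0, N.zero_mem, ?_⟩
    intro x hxN hxη hxrad
    have : x = 0 := hR x hxN hxη hxrad
    exact ⟨0, by simp [this]⟩
end
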